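/- (Composability.) Assume (N₁, m₁) ▷_E (N₂, m₂) and that the marked net (M, m) is compatible with this equivalence (its places are disjoint from P₁ ∪ P₂ and from the fresh variables of E). Then (N₁, m₁) ∥ (M, m) ▷_E (N₂, m₂) ∥ (M, m). -/

import Mathlib

/-- A labeled Petri net over a global type `V` of variables/places and labels in
`L` (`none` is the silent label `τ`).  The net only uses the places in `places`:
the flow functions vanish outside of it. -/
structure LNet (V L : Type) where
  T : Type
  places : Set V
  Pre : T → V → ℕ
  Post : T → V → ℕ
  pre_supp : ∀ t p, p ∉ places → Pre t p = 0
  post_supp : ∀ t p, p ∉ places → Post t p = 0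
  label : T → Option L

namespace LNet

variable {V L : Type}

/-- Transition `t` is enabled at marking `m`. -/
def Enabled (N : LNet V L) (m : V → ℕ) (t : N.T) : Prop :=
  ∀ p, N.Pre t p ≤ m p

/-- `m →t m'` : `t` is enabled at `m` and `m' = m - Pre(t) + Post(t)` (pointwise). -/
def Fire (N : LNet V L) (m : V → ℕ) (t : N.T) (m' : V → ℕ) : Prop :=
  N.Enabled m t ∧ ∀ p, m' p = m p - N.Pre t p + N.Post t p

/-- `m ⇒ρ m'` : the firing sequence `ρ` fires from `m` to `m'`. -/
def FireSeq (N : LNet V L) : (V → ℕ) → List N.T → (V → ℕ) → Prop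
  | m, [], m' => m' = m
  | m, t :: ρ, m'' => ∃ m', N.Fire m t m' ∧ N.FireSeq m' ρ m''

/-- Reachability from `m₀`. -/
def Reach (N : LNet V L) (m₀ m : V → ℕ) : Prop :=
  ∃ ρ, N.FireSeq m₀ ρ m

/-- The observation sequence of a firing sequence (silent transitions erased). -/
def Obs (N : LNet V L) (ρ : List N.T) : List L :=
  ρ.filterMap N.label

end LNet

/-- `m₁ ⊎ m₂ ⊨ E` : the two markings are compatible and, jointly, satisfy the
constraint system `E` (i.e. `E ∧ m̲₁ ∧ m̲₂` is satisfiable: some valuation of all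
the variables agrees with `m₁` on `P₁`, with `m₂` on `P₂` and satisfies `E`). -/
def JSat {V L : Type} (N₁ N₂ : LNet V L) (E : (V → ℕ) → Prop)
    (m₁ m₂ : V → ℕ) : Prop :=
  ∃ v : V → ℕ, (∀ p ∈ N₁.places, v p = m₁ p) ∧ (∀ p ∈ N₂.places, v p = m₂ p) ∧ E v

/-- `(N₁, m₁) ⊒_E (N₂, m₂)` : `(N₂, m₂)` is an `E`-abstraction of `(N₁, m₁)`,
conditions (A1) and (A2). -/
def EAbs {V L : Type} (N₁ : LNet V L) (m₁ : V → ℕ) (N₂ : LNet V L) (m₂ : V → ℕ)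
    (E : (V → ℕ) → Prop) : Prop :=
  -- (A1) the initial markings jointly satisfy `E`
  JSat N₁ N₂ E m₁ m₂ ∧
  -- (A2)
  ∀ ρ₁ m₁', N₁.FireSeq m₁ ρ₁ m₁' →
    (∃ m₂' : V → ℕ, JSat N₁ N₂ E m₁' m₂') ∧
    ∀ m₂' : V → ℕ, JSat N₁ N₂ E m₁' m₂' →
      ∃ ρ₂ m₂'', N₂.FireSeq m₂ ρ₂ m₂'' ∧ (∀ p ∈ N₂.places, m₂'' p = m₂' p) ∧
        N₁.Obs ρ₁ = N₂.Obs ρ₂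

/-- `(N₁, m₁) ▷_E (N₂, m₂)` : `E`-abstraction equivalence (abstraction in both
directions). -/
def EEquiv {V L : Type} (N₁ : LNet V L) (m₁ : V → ℕ) (N₂ : LNet V L) (m₂ : V → ℕ)
    (E : (V → ℕ) → Prop) : Prop :=
  EAbs N₁ m₁ N₂ m₂ E ∧ EAbs N₂ m₂ N₁ m₁ E

/-- `F` is a formula whose (free) variables all belong to `S`: its truth value
only depends on the values of the variables in `S`. -/
def DependsOnVars {V : Type} (F : (V → ℕ) → Prop) (S : Set V) : Prop :=
  ∀ v w : V → ℕ, (∀ x ∈ S, v x = w x) → (F v ↔ F w)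

open scoped Classical

/-- Valid transitions of the synchronous product (relative to the alphabets
`S₁`, `S₂` of the two nets): a non-synchronizable transition of one component
fires alone, transitions with a matching (observable) label fire jointly. -/
def Valid {T₁ T₂ L : Type} (l₁ : T₁ → Option L) (l₂ : T₂ → Option L) (S₁ S₂ : Set L) :
    Option T₁ × Option T₂ → Prop
  | (some t₁, none) => ∀ a, l₁ t₁ = some a → a ∉ S₂
  | (none, some t₂) => ∀ a, l₂ t₂ = some a → a ∉ S₁
  | (some t₁, some t₂) => ∃ a, l₁ t₁ = some a ∧ l₂ t₂ = some a
  | (none, none) => False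

/-- The synchronous product `N₁ ∥ N₂` of two labeled Petri nets (with alphabets
`S₁` and `S₂`): places are `P₁ ∪ P₂`, flow functions are inherited
componentwise. -/
def prodNet {V L : Type} (N₁ N₂ : LNet V L) (S₁ S₂ : Set L) : LNet V L where
  T := {tp : Option N₁.T × Option N₂.T // Valid N₁.label N₂.label S₁ S₂ tp}
  places := N₁.places ∪ N₂.places
  Pre t p := (t.val.1.elim 0 fun t₁ => N₁.Pre t₁ p) + (t.val.2.elim 0 fun t₂ => N₂.Pre t₂ p)
  Post t p := (t.val.1.elim 0 fun t₁ => N₁.Post t₁ p) + (t.val.2.elim 0 fun t₂ => N₂.Post t₂ p)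
  pre_supp := by
    intro t p hp
    have h1 : p ∉ N₁.places := fun h => hp (Or.inl h)
    have h2 : p ∉ N₂.places := fun h => hp (Or.inr h)
    rcases t with ⟨⟨t₁, t₂⟩, -⟩
    cases t₁ <;> cases t₂ <;>
      simp [Option.elim, N₁.pre_supp _ _ h1, N₂.pre_supp _ _ h2]
  post_supp := by
    intro t p hp
    have h1 : p ∉ N₁.places := fun h => hp (Or.inl h)
    have h2 : p ∉ N₂.places := fun h => hp (Or.inr h)
    rcases t with ⟨⟨t₁, t₂⟩, -⟩
    cases t₁ <;> cases t₂ <;>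
      simp [Option.elim, N₁.post_supp _ _ h1, N₂.post_supp _ _ h2]
  label t := t.val.1.elim (t.val.2.elim none N₂.label) N₁.label

/-- The joint marking `m₁ ∥ m₂` of a synchronous product whose left component
has places `P`: it agrees with `m₁` on `P` and with `m₂` elsewhere (the place
sets being disjoint). -/
noncomputable def combine {V : Type} (P : Set V) (m₁ m₂ : V → ℕ) : V → ℕ :=
  fun p => if p ∈ P then m₁ p else m₂ p

/-!
A run of `N₁ ∥ M` splits into a run of `N₁` and a run of `M`, since the two place sets are
disjoint. Condition (A2) for `N₁` yields a run of `N₂` with the same observations, which is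
re-interleaved with the same run of `M`: silent moves of `N₂` fire alone, and each observable move
of `N₂` replaces the move of `N₁` with the same label, so it synchronises with `M` exactly as that
one did. As `M` shares no variable with `E`, a valuation witnessing `E` on `P₁ ∪ P₂` can be
overwritten by the marking of `M` on its places.
-/

open Set

variable {V L : Type}

/-- `N.Fire m t m'` unfolds to `MarkingStep (N.Pre t) (N.Post t) m m'`; the product fires the sum
of the vectors of its components. -/
def MarkingStep (pre post m m' : V → ℕ) : Prop :=
  pre ≤ m ∧ ∀ p, m' p = m p - pre p + post p

namespace MarkingStep

variable {P Q : Set V} {pre post x x' y y' μ μ' a a' b b' : V → ℕ}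

theorem restrict (h : MarkingStep pre post μ μ') (hx : ∀ p ∉ P, x p = 0)
    (hpre : EqOn pre x P) (hpost : EqOn post x' P) (ha : EqOn a μ P) :
    ∃ a', MarkingStep x x' a a' ∧ EqOn a' μ' P := by
  refine ⟨fun p => a p - x p + x' p, ⟨fun p => ?_, fun _ => rfl⟩, fun p hp => ?_⟩
  · by_cases hp : p ∈ P
    · rw [ha hp, ← hpre hp]
      exact h.1 p
    · simp [hx p hp]
  · simp only [h.2 p, ha hp, hpre hp, hpost hp]

theorem add (hxa : MarkingStep x x' a a') (hyb : MarkingStep y y' b b') (hPQ : Disjoint P Q)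
    (hx : ∀ p ∉ P, x p = 0) (hx' : ∀ p ∉ P, x' p = 0)
    (hy : ∀ p ∉ Q, y p = 0) (hy' : ∀ p ∉ Q, y' p = 0)
    (ha : EqOn μ a P) (hb : EqOn μ b Q) :
    ∃ μ', MarkingStep (x + y) (x' + y') μ μ' ∧ EqOn μ' a' P ∧ EqOn μ' b' Q := by
  refine ⟨fun p => μ p - (x p + y p) + (x' p + y' p), ⟨fun p => ?_, fun _ => rfl⟩,
    fun p hp => ?_, fun p hp => ?_⟩
  · by_cases hpP : p ∈ P
    · have hpQ : p ∉ Q := hPQ.notMem_of_mem_left hpP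
      simpa [hy p hpQ, ha hpP] using hxa.1 p
    · by_cases hpQ : p ∈ Q
      · simpa [hx p hpP, hb hpQ] using hyb.1 p
      · simp [hx p hpP, hy p hpQ]
  · have hpQ : p ∉ Q := hPQ.notMem_of_mem_left hp
    simp [hy p hpQ, hy' p hpQ, ha hp, hxa.2 p]
  · have hpP : p ∉ P := hPQ.notMem_of_mem_right hp
    simp [hx p hpP, hx' p hpP, hb hp, hyb.2 p]

end MarkingStep

namespace LNet

def preOpt (N : LNet V L) (o : Option N.T) (p : V) : ℕ := o.elim 0 (N.Pre · p)

def postOpt (N : LNet V L) (o : Option N.T) (p : V) : ℕ := o.elim 0 (N.Post · p)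

variable {N : LNet V L}

theorem preOpt_of_notMem {p : V} (hp : p ∉ N.places) (o : Option N.T) : N.preOpt o p = 0 := by
  cases o <;> simp [preOpt, N.pre_supp _ _ hp]

theorem postOpt_of_notMem {p : V} (hp : p ∉ N.places) (o : Option N.T) :
    N.postOpt o p = 0 := by
  cases o <;> simp [postOpt, N.post_supp _ _ hp]

theorem fireSeq_filterMap_cons {α : Type*} (f : α → Option N.T) (x : α) (l : List α)
    (a a'' : V → ℕ) :
    N.FireSeq a ((x :: l).filterMap f) a'' ↔
      ∃ a', MarkingStep (N.preOpt (f x)) (N.postOpt (f x)) a a' ∧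
        N.FireSeq a' (l.filterMap f) a'' := by
  cases hx : f x with
  | some t => simp only [List.filterMap_cons_some hx]; rfl
  | none =>
    rw [List.filterMap_cons_none hx]
    constructor
    · exact fun h => ⟨a, ⟨fun _ => Nat.zero_le _, fun _ => rfl⟩, h⟩
    · rintro ⟨a', ⟨-, ha'⟩, h⟩
      obtain rfl : a' = a := funext ha'
      exact h

theorem FireSeq.project {K : LNet V L} (π : K.T → Option N.T)
    (hpre : ∀ t, EqOn (K.Pre t) (N.preOpt (π t)) N.places)
    (hpost : ∀ t, EqOn (K.Post t) (N.postOpt (π t)) N.places)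
    {σ : List K.T} {μ μ' a : V → ℕ} (h : K.FireSeq μ σ μ') (ha : EqOn a μ N.places) :
    ∃ a', N.FireSeq a (σ.filterMap π) a' ∧ EqOn a' μ' N.places := by
  induction σ generalizing μ a with
  | nil =>
    obtain rfl : μ' = μ := h
    exact ⟨a, rfl, ha⟩
  | cons t σ ih =>
    obtain ⟨μ₁, ht, hσ⟩ := h
    obtain ⟨a₁, hta, ha₁⟩ :=
      MarkingStep.restrict ht (fun p hp => preOpt_of_notMem hp _) (hpre t) (hpost t) ha
    obtain ⟨a', hσa, ha'⟩ := ih hσ ha₁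
    exact ⟨a', (fireSeq_filterMap_cons π t σ a a').2 ⟨a₁, hta, hσa⟩, ha'⟩

end LNet

theorem Valid.of_label_eq {T₁ T₁' T₂ : Type} {l₁ : T₁ → Option L} {l₁' : T₁' → Option L}
    {l₂ : T₂ → Option L} {S₁ S₂ : Set L} {t : T₁} {t' : T₁'} {o : Option T₂}
    (hv : Valid l₁ l₂ S₁ S₂ (some t, o)) (h : l₁' t' = l₁ t) :
    Valid l₁' l₂ S₁ S₂ (some t', o) := by
  cases o <;> simpa [Valid, h] using hv

theorem Valid.of_none_left {T₁ T₁' T₂ : Type} {l₁ : T₁ → Option L} {l₁' : T₁' → Option L}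
    {l₂ : T₂ → Option L} {S₁ S₂ : Set L} {o : Option T₂} (hv : Valid l₁ l₂ S₁ S₂ (none, o)) :
    Valid l₁' l₂ S₁ S₂ (none, o) := by
  cases o <;> exact hv

theorem Valid.some_none {T₁ T₂ : Type} {l₁ : T₁ → Option L} {l₂ : T₂ → Option L}
    {S₁ S₂ : Set L} {t : T₁} (ht : l₁ t = none) : Valid l₁ l₂ S₁ S₂ (some t, none) := by
  intro a ha
  rw [ht] at ha
  cases ha

namespace prodNet

variable {N M : LNet V L} {S SM : Set L}

/-- `(prodNet N M S SM).T` is a subtype only after unfolding `prodNet`, so anonymous constructors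
and `.val` on it are ill-typed at reducible transparency and `simp` cannot rewrite them; `tr`,
`left` and `right` stand in for them. -/
def tr (o₁ : Option N.T) (o₂ : Option M.T) (hv : Valid N.label M.label S SM (o₁, o₂)) :
    (prodNet N M S SM).T :=
  ⟨(o₁, o₂), hv⟩

theorem exists_eq_tr (t : (prodNet N M S SM).T) : ∃ o₁ o₂ hv, t = tr o₁ o₂ hv :=
  ⟨_, _, t.2, rfl⟩

def left (t : (prodNet N M S SM).T) : Option N.T := t.val.1

def right (t : (prodNet N M S SM).T) : Option M.T := t.val.2

@[simp]
theorem left_tr (o₁ : Option N.T) (o₂ : Option M.T) (hv) :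
    left (tr (S := S) (SM := SM) o₁ o₂ hv) = o₁ := rfl

@[simp]
theorem right_tr (o₁ : Option N.T) (o₂ : Option M.T) (hv) :
    right (tr (S := S) (SM := SM) o₁ o₂ hv) = o₂ := rfl

@[simp]
theorem label_tr_some (t : N.T) (o : Option M.T) (hv) :
    (prodNet N M S SM).label (tr (some t) o hv) = N.label t := rfl

@[simp]
theorem label_tr_none (t : M.T) (hv) :
    (prodNet N M S SM).label (tr none (some t) hv) = M.label t := rfl

theorem pre_of_notMem_right (t : (prodNet N M S SM).T) {p : V} (hp : p ∉ M.places) :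
    (prodNet N M S SM).Pre t p = N.preOpt (left t) p := by
  change N.preOpt (left t) p + M.preOpt (right t) p = _
  rw [M.preOpt_of_notMem hp, add_zero]

theorem pre_of_notMem_left (t : (prodNet N M S SM).T) {p : V} (hp : p ∉ N.places) :
    (prodNet N M S SM).Pre t p = M.preOpt (right t) p := by
  change N.preOpt (left t) p + M.preOpt (right t) p = _
  rw [N.preOpt_of_notMem hp, zero_add]

theorem post_of_notMem_right (t : (prodNet N M S SM).T) {p : V} (hp : p ∉ M.places) :
    (prodNet N M S SM).Post t p = N.postOpt (left t) p := by
  change N.postOpt (left t) p + M.postOpt (right t) p = _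
  rw [M.postOpt_of_notMem hp, add_zero]

theorem post_of_notMem_left (t : (prodNet N M S SM).T) {p : V} (hp : p ∉ N.places) :
    (prodNet N M S SM).Post t p = M.postOpt (right t) p := by
  change N.postOpt (left t) p + M.postOpt (right t) p = _
  rw [N.postOpt_of_notMem hp, zero_add]

theorem fireSeq_project (hd : Disjoint N.places M.places)
    {σ : List (prodNet N M S SM).T} {μ μ' a b : V → ℕ}
    (h : (prodNet N M S SM).FireSeq μ σ μ') (ha : EqOn a μ N.places) (hb : EqOn b μ M.places) :
    ∃ a' b', N.FireSeq a (σ.filterMap left) a' ∧ M.FireSeq b (σ.filterMap right) b' ∧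
      EqOn a' μ' N.places ∧ EqOn b' μ' M.places := by
  obtain ⟨a', hNa, ha'⟩ := LNet.FireSeq.project left
    (fun t _ hp => pre_of_notMem_right t (hd.notMem_of_mem_left hp))
    (fun t _ hp => post_of_notMem_right t (hd.notMem_of_mem_left hp)) h ha
  obtain ⟨b', hMb, hb'⟩ := LNet.FireSeq.project right
    (fun t _ hp => pre_of_notMem_left t (hd.notMem_of_mem_right hp))
    (fun t _ hp => post_of_notMem_left t (hd.notMem_of_mem_right hp)) h hb
  exact ⟨a', b', hNa, hMb, ha', hb'⟩

theorem fireSeq_of_project (hd : Disjoint N.places M.places)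
    {σ : List (prodNet N M S SM).T} {a b a' b' μ : V → ℕ}
    (ha : N.FireSeq a (σ.filterMap left) a') (hb : M.FireSeq b (σ.filterMap right) b')
    (hμa : EqOn μ a N.places) (hμb : EqOn μ b M.places) :
    ∃ μ', (prodNet N M S SM).FireSeq μ σ μ' ∧ EqOn μ' a' N.places ∧ EqOn μ' b' M.places := by
  induction σ generalizing a b μ with
  | nil =>
    obtain rfl : a' = a := ha
    obtain rfl : b' = b := hb
    exact ⟨μ, rfl, hμa, hμb⟩
  | cons t σ ih =>
    obtain ⟨a₁, hta, hσa⟩ := (LNet.fireSeq_filterMap_cons _ t σ a a').1 ha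
    obtain ⟨b₁, htb, hσb⟩ := (LNet.fireSeq_filterMap_cons _ t σ b b').1 hb
    obtain ⟨μ₁, ht, hμa₁, hμb₁⟩ := MarkingStep.add hta htb hd
      (fun _ hp => N.preOpt_of_notMem hp _) (fun _ hp => N.postOpt_of_notMem hp _)
      (fun _ hp => M.preOpt_of_notMem hp _) (fun _ hp => M.postOpt_of_notMem hp _) hμa hμb
    obtain ⟨μ', hσ, hμa', hμb'⟩ := ih hσa hσb hμa₁ hμb₁
    exact ⟨μ', ⟨μ₁, ht, hσ⟩, hμa', hμb'⟩

theorem exists_run_of_silent (l : List N.T) (hl : ∀ t ∈ l, N.label t = none) :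
    ∃ σ : List (prodNet N M S SM).T, σ.filterMap left = l ∧ σ.filterMap right = [] ∧
      (prodNet N M S SM).Obs σ = [] := by
  induction l with
  | nil => exact ⟨[], rfl, rfl, rfl⟩
  | cons t l ih =>
    obtain ⟨σ, hσl, hσr, hobs⟩ := ih fun u hu => hl u (List.mem_cons_of_mem _ hu)
    have ht : N.label t = none := hl t List.mem_cons_self
    refine ⟨tr (some t) none (Valid.some_none ht) :: σ, ?_, ?_, ?_⟩
    · simp [hσl]
    · simpa using hσr
    · simpa [LNet.Obs, ht] using hobs

end prodNet

namespace prodNet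

variable {N₁ N₂ M : LNet V L} {S SM : Set L}

theorem exists_run_of_obs_eq (ρ : List (prodNet N₁ M S SM).T) (ρ₂ : List N₂.T)
    (h : N₁.Obs (ρ.filterMap left) = N₂.Obs ρ₂) :
    ∃ σ : List (prodNet N₂ M S SM).T, σ.filterMap left = ρ₂ ∧
      σ.filterMap right = ρ.filterMap right ∧
      (prodNet N₂ M S SM).Obs σ = (prodNet N₁ M S SM).Obs ρ := by
  induction ρ generalizing ρ₂ with
  | nil => exact exists_run_of_silent ρ₂ (List.filterMap_eq_nil_iff.1 h.symm)
  | cons t ρ ih =>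
    obtain ⟨o₁, o₂, hv, rfl⟩ := exists_eq_tr t
    cases o₁ with
    | none =>
      cases o₂ with
      | none => exact hv.elim
      | some tM =>
        obtain ⟨σ, hσl, hσr, hobs⟩ := ih ρ₂ (by simpa [List.filterMap_cons] using h)
        refine ⟨tr none (some tM) hv.of_none_left :: σ, ?_, ?_, ?_⟩ <;>
          simp_all [LNet.Obs, List.filterMap_cons]
    | some t₁ =>
      cases hl : N₁.label t₁ with
      | none =>
        obtain rfl : o₂ = none := by
          cases o₂ with
          | none => rfl
          | some _ => simp [Valid, hl] at hv
        obtain ⟨σ, hσl, hσr, hobs⟩ := ih ρ₂ (by simpa [LNet.Obs, hl] using h)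
        exact ⟨σ, hσl, by simpa [List.filterMap_cons] using hσr,
          by simpa [LNet.Obs, hl] using hobs⟩
      | some a =>
        obtain ⟨pre, t₂, post, rfl, hpre, ht₂, hpost⟩ :=
          List.filterMap_eq_cons_iff.1 (by simpa [LNet.Obs, hl] using h.symm)
        obtain ⟨τ, hτl, hτr, hτobs⟩ := exists_run_of_silent (M := M) (S := S) (SM := SM) pre hpre
        obtain ⟨σ, hσl, hσr, hobs⟩ := ih post hpost.symm
        refine ⟨τ ++ tr (some t₂) o₂ (hv.of_label_eq (ht₂.trans hl.symm)) :: σ, ?_, ?_, ?_⟩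
        · simp [hτl, hσl]
        · simp [hτr, hσr, List.filterMap_cons]
        · simp_all [LNet.Obs]

end prodNet

theorem combine_eqOn_left (P : Set V) (m₁ m₂ : V → ℕ) : EqOn (combine P m₁ m₂) m₁ P :=
  fun _ hp => if_pos hp

theorem combine_eqOn_right {P Q : Set V} (h : Disjoint P Q) (m₁ m₂ : V → ℕ) :
    EqOn (combine P m₁ m₂) m₂ Q :=
  fun _ hq => if_neg (h.notMem_of_mem_right hq)

theorem DependsOnVars.mono {F : (V → ℕ) → Prop} {S T : Set V} (h : DependsOnVars F S)
    (hST : S ⊆ T) : DependsOnVars F T :=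
  fun v w hvw => h v w fun x hx => hvw x (hST hx)

namespace JSat

variable {N₁ N₂ : LNet V L} {E : (V → ℕ) → Prop} {m₁ m₂ : V → ℕ}

theorem mono {N₁' N₂' : LNet V L} {m₁' m₂' : V → ℕ} (h : JSat N₁ N₂ E m₁ m₂)
    (h₁ : N₁'.places ⊆ N₁.places) (h₂ : N₂'.places ⊆ N₂.places)
    (hm₁ : EqOn m₁ m₁' N₁'.places) (hm₂ : EqOn m₂ m₂' N₂'.places) :
    JSat N₁' N₂' E m₁' m₂' := by
  obtain ⟨v, hv₁, hv₂, hvE⟩ := h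
  exact ⟨v, fun p hp => (hv₁ p (h₁ hp)).trans (hm₁ hp),
    fun p hp => (hv₂ p (h₂ hp)).trans (hm₂ hp), hvE⟩

theorem eqOn_inter (h : JSat N₁ N₂ E m₁ m₂) : EqOn m₁ m₂ (N₁.places ∩ N₂.places) := by
  obtain ⟨v, hv₁, hv₂, -⟩ := h
  exact fun p hp => (hv₁ p hp.1).symm.trans (hv₂ p hp.2)

theorem prodNet {M : LNet V L} {S SM : Set L} {μ₁ μ₂ : V → ℕ}
    (hd : Disjoint (N₁.places ∪ N₂.places) M.places) (hE : DependsOnVars E M.placesᶜ)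
    (h : JSat N₁ N₂ E m₁ m₂) (hμ₁ : EqOn μ₁ m₁ N₁.places) (hμ₂ : EqOn μ₂ m₂ N₂.places)
    (hM : EqOn μ₁ μ₂ M.places) :
    JSat (prodNet N₁ M S SM) (prodNet N₂ M S SM) E μ₁ μ₂ := by
  obtain ⟨v, hv₁, hv₂, hvE⟩ := h
  have hv : EqOn (M.places.piecewise μ₁ v) v M.placesᶜ :=
    fun p hp => piecewise_eq_of_notMem _ _ _ hp
  refine ⟨M.places.piecewise μ₁ v, ?_, ?_, (hE _ _ hv).2 hvE⟩
  · rintro p (hp | hp)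
    · rw [hv (hd.notMem_of_mem_left (Or.inl hp)), hv₁ p hp, hμ₁ hp]
    · exact piecewise_eq_of_mem _ _ _ hp
  · rintro p (hp | hp)
    · rw [hv (hd.notMem_of_mem_left (Or.inr hp)), hv₂ p hp, hμ₂ hp]
    · rw [piecewise_eq_of_mem _ _ _ hp, hM hp]

end JSat

theorem EAbs.prodNet {N₁ N₂ M : LNet V L} {m₁ m₂ m : V → ℕ} {E : (V → ℕ) → Prop}
    {S SM : Set L} (hd : Disjoint (N₁.places ∪ N₂.places) M.places)
    (hE : DependsOnVars E M.placesᶜ) (h : EAbs N₁ m₁ N₂ m₂ E) :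
    EAbs (prodNet N₁ M S SM) (combine N₁.places m₁ m)
      (prodNet N₂ M S SM) (combine N₂.places m₂ m) E := by
  have hd₁ : Disjoint N₁.places M.places := hd.mono_left subset_union_left
  have hd₂ : Disjoint N₂.places M.places := hd.mono_left subset_union_right
  obtain ⟨hinit, hrun⟩ := h
  refine ⟨hinit.prodNet hd hE (combine_eqOn_left _ _ _) (combine_eqOn_left _ _ _)
    ((combine_eqOn_right hd₁ _ _).trans (combine_eqOn_right hd₂ _ _).symm), ?_⟩
  intro ρ μ' hρ
  obtain ⟨a', b', hρ₁, hρM, ha', hb'⟩ := prodNet.fireSeq_project hd₁ hρ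
    (combine_eqOn_left _ _ _).symm (combine_eqOn_right hd₁ _ _).symm
  obtain ⟨⟨m₂', hJ⟩, hmatch⟩ := hrun _ a' hρ₁
  refine ⟨⟨combine N₂.places m₂' μ', hJ.prodNet hd hE ha'.symm (combine_eqOn_left _ _ _)
    (combine_eqOn_right hd₂ _ _).symm⟩, fun μ₂' hJ' => ?_⟩
  have hμM : EqOn μ' μ₂' M.places :=
    hJ'.eqOn_inter.mono (subset_inter subset_union_right subset_union_right)
  obtain ⟨ρ₂, m₂'', hρ₂, hm₂'', hobs⟩ :=
    hmatch μ₂' (hJ'.mono subset_union_left subset_union_left ha'.symm (eqOn_refl _ _))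
  obtain ⟨σ, hσl, hσr, hσobs⟩ := prodNet.exists_run_of_obs_eq ρ ρ₂ hobs
  obtain ⟨μ₂'', hσ, hμ₂, hμM₂⟩ := prodNet.fireSeq_of_project hd₂ (hσl ▸ hρ₂) (hσr ▸ hρM)
    (combine_eqOn_left _ _ _) (combine_eqOn_right hd₂ _ _)
  refine ⟨σ, μ₂'', hσ, ?_, hσobs.symm⟩
  rintro p (hp | hp)
  · exact (hμ₂ hp).trans (hm₂'' p hp)
  · exact (hμM₂ hp).trans ((hb' hp).trans (hμM hp))

/-- (Composability.)  Assume `(N₁, m₁) ▷_E (N₂, m₂)` and that the marked net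
`(M, m)` is compatible with this equivalence: its places are disjoint from
`P₁ ∪ P₂` and from the (fresh) variables of `E` outside `P₁ ∪ P₂`.  Then
`(N₁, m₁) ∥ (M, m) ▷_E (N₂, m₂) ∥ (M, m)`. -/
theorem EEquiv_prod {V L : Type} (N₁ N₂ M : LNet V L) (m₁ m₂ m : V → ℕ)
    (E : (V → ℕ) → Prop) (S SM : Set L) (fvE : Set V)
    (hE : DependsOnVars E fvE)
    (hdisj : (N₁.places ∪ N₂.places) ∩ M.places = ∅)
    (hfresh : (fvE \ (N₁.places ∪ N₂.places)) ∩ M.places = ∅)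
    (h : EEquiv N₁ m₁ N₂ m₂ E) :
    EEquiv (prodNet N₁ M S SM) (combine N₁.places m₁ m)
           (prodNet N₂ M S SM) (combine N₂.places m₂ m) E := by
  have hd : Disjoint (N₁.places ∪ N₂.places) M.places := disjoint_iff_inter_eq_empty.2 hdisj
  have hfvE : fvE ⊆ M.placesᶜ := by
    intro p hp hpM
    by_cases hp₁₂ : p ∈ N₁.places ∪ N₂.places
    · exact hd.notMem_of_mem_left hp₁₂ hpM
    · exact (eq_empty_iff_forall_notMem.1 hfresh) p ⟨⟨hp, hp₁₂⟩, hpM⟩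
  have hE' : DependsOnVars E M.placesᶜ := hE.mono hfvE
  exact ⟨h.1.prodNet hd hE', h.2.prodNet (union_comm N₁.places N₂.places ▸ hd) hE'⟩
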